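/- Let M be a complete metric space, let (φ_j)_{j∈ω} be a sequence of uniformly continuous functions from M to [0,1], and let D be a dense subset of M. Then there exists a point a ∈ M with φ_j(a) = 0 for all j if and only if there exists a sequence (x_n)_{n∈ω} of elements of D such that d(x_n, x_{n+1}) ≤ 2^{−n} for all n and φ_j(x_n) ≤ 1/(n+1) for all j ≤ n. -/

import Mathlib

open Filter Topology

/-!
Forward: points of `D` ever closer to a common zero `a`, within `2^{-(n+1)}` of `a` and where the
first `n + 1` functions are below `1/(n+1)`, form the required sequence. Backward: the steps are
summable, so the sequence is Cauchy; its limit is a common zero by continuity and `φ_j ≥ 0`.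
-/

section

variable {X : Type*} [PseudoMetricSpace X]

theorem Dense.exists_mem_near_common_zero {D : Set X} (hD : Dense D) {φ : ℕ → X → ℝ} {a : X}
    (hφ : ∀ j, ContinuousAt (φ j) a) (ha : ∀ j, φ j a = 0) (n : ℕ) {ε δ : ℝ} (hε : 0 < ε)
    (hδ : 0 < δ) : ∃ y ∈ D, dist y a < ε ∧ ∀ j ≤ n, φ j y < δ := by
  have hnear : ∀ᶠ y in 𝓝 a, dist y a < ε ∧ ∀ j ∈ Finset.range (n + 1), φ j y < δ := by
    refine Eventually.and (show ∀ᶠ y in 𝓝 a, dist y a < ε from Metric.ball_mem_nhds a hε) ?_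
    rw [eventually_all_finset]
    exact fun j _ => (hφ j).eventually_lt_const (by rwa [ha j])
  obtain ⟨y, ⟨hya, hyφ⟩, hyD⟩ := mem_closure_iff_nhds.mp (hD a) _ hnear
  exact ⟨y, hyD, hya, fun j hj => hyφ j (Finset.mem_range_succ_iff.mpr hj)⟩

theorem dist_succ_le_half_pow_of_dist_lt {x : ℕ → X} {a : X}
    (hx : ∀ n, dist (x n) a < (1 / 2) ^ (n + 1)) (n : ℕ) :
    dist (x n) (x (n + 1)) ≤ (1 / 2) ^ n :=
  calc dist (x n) (x (n + 1)) ≤ dist (x n) a + dist (x (n + 1)) a := dist_triangle_right _ _ _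
    _ ≤ (1 / 2) ^ (n + 1) + (1 / 2) ^ (n + 1 + 1) := add_le_add (hx n).le (hx (n + 1)).le
    _ = 3 / 4 * (1 / 2) ^ n := by ring
    _ ≤ (1 / 2) ^ n := by
      have : (0 : ℝ) ≤ (1 / 2) ^ n := by positivity
      linarith

theorem exists_seq_approx_common_zero {D : Set X} (hD : Dense D) {φ : ℕ → X → ℝ} {a : X}
    (hφ : ∀ j, ContinuousAt (φ j) a) (ha : ∀ j, φ j a = 0) :
    ∃ x : ℕ → X, (∀ n, x n ∈ D) ∧ (∀ n, dist (x n) (x (n + 1)) ≤ (1 / 2) ^ n) ∧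
      ∀ n, ∀ j ≤ n, φ j (x n) ≤ 1 / (n + 1) := by
  choose x hxD hxa hxφ using fun n : ℕ =>
    hD.exists_mem_near_common_zero hφ ha n (ε := (1 / 2) ^ (n + 1)) (δ := 1 / (n + 1))
      (by positivity) (by positivity)
  exact ⟨x, hxD, dist_succ_le_half_pow_of_dist_lt hxa, fun n j hj => (hxφ n j hj).le⟩

theorem nonpos_of_tendsto_of_le_one_div_succ {f : ℕ → ℝ} {c : ℝ} (hf : Tendsto f atTop (𝓝 c))
    (hle : ∀ᶠ n in atTop, f n ≤ 1 / ((n : ℝ) + 1)) : c ≤ 0 :=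
  le_of_tendsto_of_tendsto hf tendsto_one_div_add_atTop_nhds_zero_nat hle

theorem exists_common_zero_of_approx_seq [CompleteSpace X] {φ : ℕ → X → ℝ}
    (hφ : ∀ j, Continuous (φ j)) (hφ_nonneg : ∀ j y, 0 ≤ φ j y) {x : ℕ → X}
    (hdist : ∀ n, dist (x n) (x (n + 1)) ≤ (1 / 2) ^ n)
    (hx : ∀ n, ∀ j ≤ n, φ j (x n) ≤ 1 / (n + 1)) : ∃ a, ∀ j, φ j a = 0 := by
  have hcauchy : CauchySeq x :=
    cauchySeq_of_le_geometric (1 / 2) 1 (by norm_num) (by simpa using hdist)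
  obtain ⟨a, hxa⟩ := cauchySeq_tendsto_of_complete hcauchy
  refine ⟨a, fun j => le_antisymm ?_ (hφ_nonneg j a)⟩
  exact nonpos_of_tendsto_of_le_one_div_succ (((hφ j).tendsto a).comp hxa)
    ((eventually_ge_atTop j).mono fun n hn => hx n j hn)

end

/-- In a complete metric space `M` with dense subset `D`, a sequence
`(φ_j)` of uniformly continuous `[0,1]`-valued functions has a common zero if
and only if there is a sequence `(x_n)` in `D` with `d(x_n, x_{n+1}) ≤ 2^{-n}`
and `φ_j(x_n) ≤ 1/(n+1)` for all `j ≤ n`. -/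
theorem common_zero_iff_approx_seq {M : Type*} [MetricSpace M] [CompleteSpace M]
    (φ : ℕ → M → ℝ) (hrange : ∀ j x, φ j x ∈ Set.Icc (0 : ℝ) 1)
    (huc : ∀ j, UniformContinuous (φ j))
    (D : Set M) (hD : Dense D) :
    (∃ a : M, ∀ j, φ j a = 0) ↔
      ∃ x : ℕ → M, (∀ n, x n ∈ D) ∧
        (∀ n, dist (x n) (x (n + 1)) ≤ (1 / 2) ^ n) ∧
        (∀ n, ∀ j ≤ n, φ j (x n) ≤ 1 / (n + 1)) := by
  have hcont : ∀ j, Continuous (φ j) := fun j => (huc j).continuous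
  constructor
  · rintro ⟨a, ha⟩
    exact exists_seq_approx_common_zero hD (fun j => (hcont j).continuousAt) ha
  · rintro ⟨x, -, hdist, hx⟩
    exact exists_common_zero_of_approx_seq hcont (fun j y => (hrange j y).1) hdist hx
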